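/- arXiv:2106.08975 — 2 statements merged into one kernel-verified Lean document; each statement's English description precedes it below -/
import Mathlib

section
/- Let G and G' be graphs on the same vertex set V with G' a subgraph of G, and let s₁, s₂, ℓ be positive integers such that: (1) every vertex set S with |S| < s₁+s₂+ℓ spans fewer than 2s₂ edges in G; and (2) every vertex set S with |S| = s₁ satisfies |N_{G'}(S)| ≥ s₂+ℓ. If |V| ≥ ℓ+s₁+s₂, then G' contains a path of length ℓ whose vertex set induces a path in G (in particular, this path is an induced path of G all of whose edges belong to G'). -/
open Finset SimpleGraph

open scoped Classical

/-- The number of edges of `G` spanned by the vertex set `S` (both endpoints in `S`). -/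
noncomputable def edgesIn {V : Type*} [Fintype V] (G : SimpleGraph V) (S : Finset V) : ℕ :=
  (G.edgeFinset.filter fun e => ∀ v ∈ e, v ∈ S).card

/-- The external neighbourhood of `S` in `G`: vertices outside `S` with a neighbour in `S`. -/
noncomputable def extNbhd {V : Type*} [Fintype V] (G : SimpleGraph V) (S : Finset V) :
    Finset V :=
  (S.biUnion fun v => G.neighborFinset v) \ S

section Aux

variable {V : Type*} [Fintype V]

lemma mem_extNbhd {G : SimpleGraph V} {S : Finset V} {z : V} :
    z ∈ extNbhd G S ↔ z ∉ S ∧ ∃ w ∈ S, G.Adj w z := by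
  simp only [extNbhd, Finset.mem_sdiff, Finset.mem_biUnion, SimpleGraph.mem_neighborFinset]
  tauto

lemma count_lemma (G : SimpleGraph V) (S B N₀ : Finset V) (extra : Finset (Sym2 V))
    (w x : V → V)
    (hN₀S : N₀ ⊆ S) (hBS : B ⊆ S) (hdisj : ∀ z ∈ N₀, z ∉ B)
    (hprop : ∀ z ∈ N₀, w z ∈ B ∧ x z ∈ B ∧ w z ≠ x z ∧ G.Adj z (w z) ∧ G.Adj z (x z))
    (hextra : ∀ e ∈ extra, e ∈ G.edgeSet ∧ ∀ v ∈ e, v ∈ B) :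
    2 * N₀.card + extra.card ≤ edgesIn G S := by
  classical
  set F := G.edgeFinset.filter (fun e => ∀ v ∈ e, v ∈ S) with hF
  have hmemF : ∀ e, e ∈ G.edgeSet → (∀ v ∈ e, v ∈ S) → e ∈ F := by
    intro e he hv
    rw [hF, Finset.mem_filter, SimpleGraph.mem_edgeFinset]
    exact ⟨he, hv⟩
  set T := N₀.biUnion (fun z => ({s(z, w z), s(z, x z)} : Finset (Sym2 V))) with hT
  have hTF : T ⊆ F := by
    intro e he
    rw [hT, Finset.mem_biUnion] at he
    obtain ⟨z, hz, he⟩ := he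
    obtain ⟨h1, h2, h3, h4, h5⟩ := hprop z hz
    have hzS := hN₀S hz
    rcases Finset.mem_insert.mp he with rfl | he
    · refine hmemF _ ((G.mem_edgeSet).mpr h4) ?_
      intro v hv
      rcases Sym2.mem_iff.mp hv with rfl | rfl
      · exact hzS
      · exact hBS h1
    · rw [Finset.mem_singleton] at he
      subst he
      refine hmemF _ ((G.mem_edgeSet).mpr h5) ?_
      intro v hv
      rcases Sym2.mem_iff.mp hv with rfl | rfl
      · exact hzS
      · exact hBS h2
  have hTcard : T.card = 2 * N₀.card := by
    rw [hT, Finset.card_biUnion]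
    · have : ∀ z ∈ N₀, ({s(z, w z), s(z, x z)} : Finset (Sym2 V)).card = 2 := by
        intro z hz
        exact Finset.card_pair (fun hh => (hprop z hz).2.2.1 (Sym2.congr_right.mp hh))
      rw [Finset.sum_congr rfl this, Finset.sum_const, smul_eq_mul, mul_comm]
    · intro a ha b hb hab
      rw [Function.onFun, Finset.disjoint_left]
      intro e hea heb
      have hbe : b ∈ e := by
        rcases Finset.mem_insert.mp heb with rfl | heb
        · exact Sym2.mem_mk_left _ _
        · rw [Finset.mem_singleton] at heb; subst heb; exact Sym2.mem_mk_left _ _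
      have : b ∈ B := by
        rcases Finset.mem_insert.mp hea with rfl | hea
        · rcases Sym2.mem_iff.mp hbe with rfl | rfl
          · exact absurd rfl hab.symm
          · exact (hprop a ha).1
        · rw [Finset.mem_singleton] at hea; subst hea
          rcases Sym2.mem_iff.mp hbe with rfl | rfl
          · exact absurd rfl hab.symm
          · exact (hprop a ha).2.1
      exact hdisj b hb this
  have hdisjTE : Disjoint T extra := by
    rw [Finset.disjoint_left]
    intro e heT heE
    rw [hT, Finset.mem_biUnion] at heT
    obtain ⟨z, hz, he⟩ := heT
    have hze : z ∈ e := by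
      rcases Finset.mem_insert.mp he with rfl | he
      · exact Sym2.mem_mk_left _ _
      · rw [Finset.mem_singleton] at he; subst he; exact Sym2.mem_mk_left _ _
    exact hdisj z hz ((hextra e heE).2 z hze)
  have hEF : extra ⊆ F := by
    intro e he
    exact hmemF e (hextra e he).1 (fun v hv => hBS ((hextra e he).2 v hv))
  have hUnion : T ∪ extra ⊆ F := Finset.union_subset hTF hEF
  have := Finset.card_le_card hUnion
  rw [Finset.card_union_of_disjoint hdisjTE, hTcard] at this
  exact this

lemma contra_lemma (G G' : SimpleGraph V) (hsub : G' ≤ G) (s₁ s₂ ℓ : ℕ)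
    (hs₂ : 0 < s₂)
    (hdense : ∀ S : Finset V, S.card < s₁ + s₂ + ℓ → edgesIn G S < 2 * s₂)
    (hexp : ∀ S : Finset V, S.card = s₁ → s₂ + ℓ ≤ (extNbhd G' S).card)
    (D : Finset V) (hD : D.card = s₁)
    (L : List V) (h : V) (hhL : h ∈ L) (hlen : L.length ≤ ℓ)
    (hLD : ∀ a ∈ L, a ∉ D)
    (hwit : ∀ z, z ∉ D → z ∉ L → ∀ w ∈ D, G'.Adj w z →
      ∃ x, (x ∈ D ∨ x ∈ L) ∧ x ≠ w ∧ G.Adj z x)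
    (hhead : (∃ w' ∈ D, G.Adj h w') ∨
      (∀ z, z ∉ D → z ∉ L → ∀ w ∈ D, G'.Adj w z →
        ∃ x, (x ∈ D ∨ x ∈ L) ∧ x ≠ w ∧ x ≠ h ∧ G.Adj z x))
    (hsecond : L.length = ℓ → ∃ h₂, h₂ ∈ L ∧ h₂ ≠ h ∧ G.Adj h h₂) :
    False := by
  classical
  have hN := hexp D hD
  set N := extNbhd G' D with hNdef
  set M := N \ L.toFinset with hMdef
  have hM : s₂ ≤ M.card := by
    rw [hMdef]
    have h1 := Finset.le_card_sdiff L.toFinset N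
    have h2 : L.toFinset.card ≤ L.length := L.toFinset_card_le
    omega
  have hMspec : ∀ z ∈ M, z ∉ D ∧ z ∉ L ∧ ∃ w ∈ D, G'.Adj w z := by
    intro z hz
    rw [hMdef, Finset.mem_sdiff, hNdef, mem_extNbhd] at hz
    obtain ⟨⟨hzD, hw⟩, hzL⟩ := hz
    exact ⟨hzD, fun hc => hzL (List.mem_toFinset.mpr hc), hw⟩
  have hLcard : L.toFinset.card ≤ ℓ := le_trans L.toFinset_card_le hlen
  rcases hhead with ⟨w', hw'D, hw'adj⟩ | hb
  · rcases lt_or_eq_of_le hlen with hlt | heq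
    · -- case a, short L
      obtain ⟨N₀, hN₀M, hN₀card⟩ := Finset.exists_subset_card_eq hM
      have hall : ∀ z ∈ N₀, ∃ wz xz, (wz ∈ D ∨ wz ∈ L) ∧ (xz ∈ D ∨ xz ∈ L) ∧ wz ≠ xz ∧
          G.Adj z wz ∧ G.Adj z xz := by
        intro z hz
        obtain ⟨hzD, hzL, w0, hw0D, hadj0⟩ := hMspec z (hN₀M hz)
        obtain ⟨x0, hx0, hx0w, hx0adj⟩ := hwit z hzD hzL w0 hw0D hadj0
        exact ⟨w0, x0, Or.inl hw0D, hx0, fun hc => hx0w hc.symm, (hsub hadj0).symm, hx0adj⟩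
      choose! wf xf h1 h2 h3 h4 h5 using hall
      set B := D ∪ L.toFinset with hBdef
      set S := B ∪ N₀ with hSdef
      have hinB : ∀ y, (y ∈ D ∨ y ∈ L) → y ∈ B := by
        intro y hy
        rw [hBdef, Finset.mem_union]
        rcases hy with hy | hy
        · exact Or.inl hy
        · exact Or.inr (List.mem_toFinset.mpr hy)
      have hcount := count_lemma G S B N₀ ∅ wf xf Finset.subset_union_right
        Finset.subset_union_left
        (by
          intro z hz hzB
          obtain ⟨hzD, hzL, _⟩ := hMspec z (hN₀M hz)
          rw [hBdef, Finset.mem_union] at hzB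
          rcases hzB with hc | hc
          · exact hzD hc
          · exact hzL (List.mem_toFinset.mp hc))
        (fun z hz => ⟨hinB _ (h1 z hz), hinB _ (h2 z hz), h3 z hz, h4 z hz, h5 z hz⟩)
        (by intro e he; exact absurd he (Finset.notMem_empty e))
      have hScard : S.card < s₁ + s₂ + ℓ := by
        have hsc : S.card ≤ D.card + L.toFinset.card + N₀.card := by
          rw [hSdef, hBdef]
          calc ((D ∪ L.toFinset) ∪ N₀).card ≤ (D ∪ L.toFinset).card + N₀.card :=
                Finset.card_union_le _ _
            _ ≤ D.card + L.toFinset.card + N₀.card :=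
                Nat.add_le_add_right (Finset.card_union_le _ _) _
        have hL1 : L.toFinset.card ≤ ℓ - 1 := by
          have := L.toFinset_card_le; omega
        omega
      have := hdense S hScard
      simp only [Finset.card_empty] at hcount
      omega
    · -- case a, L.length = ℓ
      obtain ⟨h₂, hh₂L, hh₂ne, hh₂adj⟩ := hsecond heq
      obtain ⟨N₀, hN₀M, hN₀card⟩ := Finset.exists_subset_card_eq (show s₂ - 1 ≤ M.card by omega)
      have hall : ∀ z ∈ N₀, ∃ wz xz, (wz ∈ D ∨ wz ∈ L) ∧ (xz ∈ D ∨ xz ∈ L) ∧ wz ≠ xz ∧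
          G.Adj z wz ∧ G.Adj z xz := by
        intro z hz
        obtain ⟨hzD, hzL, w0, hw0D, hadj0⟩ := hMspec z (hN₀M hz)
        obtain ⟨x0, hx0, hx0w, hx0adj⟩ := hwit z hzD hzL w0 hw0D hadj0
        exact ⟨w0, x0, Or.inl hw0D, hx0, fun hc => hx0w hc.symm, (hsub hadj0).symm, hx0adj⟩
      choose! wf xf h1 h2 h3 h4 h5 using hall
      set B := D ∪ L.toFinset with hBdef
      set S := B ∪ N₀ with hSdef
      have hinB : ∀ y, (y ∈ D ∨ y ∈ L) → y ∈ B := by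
        intro y hy
        rw [hBdef, Finset.mem_union]
        rcases hy with hy | hy
        · exact Or.inl hy
        · exact Or.inr (List.mem_toFinset.mpr hy)
      set extra : Finset (Sym2 V) := {s(h, w'), s(h, h₂)} with hEdef
      have hextracard : extra.card = 2 := by
        refine Finset.card_pair ?_
        intro hc
        have := Sym2.congr_right.mp hc
        subst this
        exact hLD _ hh₂L hw'D
      have hcount := count_lemma G S B N₀ extra wf xf Finset.subset_union_right
        Finset.subset_union_left
        (by
          intro z hz hzB
          obtain ⟨hzD, hzL, _⟩ := hMspec z (hN₀M hz)
          rw [hBdef, Finset.mem_union] at hzB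
          rcases hzB with hc | hc
          · exact hzD hc
          · exact hzL (List.mem_toFinset.mp hc))
        (fun z hz => ⟨hinB _ (h1 z hz), hinB _ (h2 z hz), h3 z hz, h4 z hz, h5 z hz⟩)
        (by
          intro e he
          rw [hEdef] at he
          rcases Finset.mem_insert.mp he with rfl | he
          · refine ⟨(G.mem_edgeSet).mpr hw'adj, ?_⟩
            intro y hy
            rcases Sym2.mem_iff.mp hy with rfl | rfl
            · exact hinB _ (Or.inr hhL)
            · exact hinB _ (Or.inl hw'D)
          · rw [Finset.mem_singleton] at he; subst he
            refine ⟨(G.mem_edgeSet).mpr hh₂adj, ?_⟩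
            intro y hy
            rcases Sym2.mem_iff.mp hy with rfl | rfl
            · exact hinB _ (Or.inr hhL)
            · exact hinB _ (Or.inr hh₂L))
      have hScard : S.card < s₁ + s₂ + ℓ := by
        have hsc : S.card ≤ D.card + L.toFinset.card + N₀.card := by
          rw [hSdef, hBdef]
          calc ((D ∪ L.toFinset) ∪ N₀).card ≤ (D ∪ L.toFinset).card + N₀.card :=
                Finset.card_union_le _ _
            _ ≤ D.card + L.toFinset.card + N₀.card :=
                Nat.add_le_add_right (Finset.card_union_le _ _) _
        omega
      have := hdense S hScard
      rw [hextracard] at hcount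
      omega
  · -- case b : witnesses avoid h
    obtain ⟨N₀, hN₀M, hN₀card⟩ := Finset.exists_subset_card_eq hM
    set B := D ∪ (L.toFinset.erase h) with hBdef
    have hall : ∀ z ∈ N₀, ∃ wz xz, wz ∈ B ∧ xz ∈ B ∧ wz ≠ xz ∧
        G.Adj z wz ∧ G.Adj z xz := by
      intro z hz
      obtain ⟨hzD, hzL, w0, hw0D, hadj0⟩ := hMspec z (hN₀M hz)
      obtain ⟨x0, hx0, hx0w, hx0h, hx0adj⟩ := hb z hzD hzL w0 hw0D hadj0
      refine ⟨w0, x0, ?_, ?_, fun hc => hx0w hc.symm, (hsub hadj0).symm, hx0adj⟩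
      · exact Finset.mem_union_left _ hw0D
      · rw [hBdef, Finset.mem_union]
        rcases hx0 with hx0 | hx0
        · exact Or.inl hx0
        · exact Or.inr (Finset.mem_erase.mpr ⟨hx0h, List.mem_toFinset.mpr hx0⟩)
    choose! wf xf h1 h2 h3 h4 h5 using hall
    set S := B ∪ N₀ with hSdef
    have hcount := count_lemma G S B N₀ ∅ wf xf Finset.subset_union_right
      Finset.subset_union_left
      (by
        intro z hz hzB
        obtain ⟨hzD, hzL, _⟩ := hMspec z (hN₀M hz)
        rw [hBdef, Finset.mem_union] at hzB
        rcases hzB with hc | hc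
        · exact hzD hc
        · exact hzL (List.mem_toFinset.mp (Finset.mem_of_mem_erase hc)))
      (fun z hz => ⟨h1 z hz, h2 z hz, h3 z hz, h4 z hz, h5 z hz⟩)
      (by intro e he; exact absurd he (Finset.notMem_empty e))
    have hScard : S.card < s₁ + s₂ + ℓ := by
      have hBc : B.card ≤ D.card + (L.toFinset.card - 1) := by
        rw [hBdef]
        have h1 := Finset.card_union_le D (L.toFinset.erase h)
        have h2 := Finset.card_erase_of_mem (List.mem_toFinset.mpr hhL)
        omega
      have hsc : S.card ≤ B.card + N₀.card := by
        rw [hSdef]; exact Finset.card_union_le B N₀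
      have hL1 : 1 ≤ L.toFinset.card := Finset.card_pos.mpr ⟨h, List.mem_toFinset.mpr hhL⟩
      have := L.toFinset_card_le
      omega
    have := hdense S hScard
    simp only [Finset.card_empty] at hcount
    omega

lemma card_add_len_le (D : Finset V) (L : List V) (hnd : L.Nodup)
    (hdisj : ∀ a ∈ L, a ∉ D) : D.card + L.length ≤ Fintype.card V := by
  classical
  have hdisj' : Disjoint D L.toFinset := by
    rw [Finset.disjoint_right]
    intro a ha
    exact hdisj a (List.mem_toFinset.mp ha)
  calc D.card + L.length = (D ∪ L.toFinset).card := by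
        rw [Finset.card_union_of_disjoint hdisj', List.toFinset_card_of_nodup hnd]
    _ ≤ Fintype.card V := by
        rw [← Finset.card_univ]; exact Finset.card_le_card (Finset.subset_univ _)

lemma main_aux (G G' : SimpleGraph V) (hsub : G' ≤ G) (s₁ s₂ ℓ : ℕ)
    (hs₂ : 0 < s₂) (hℓ : 2 ≤ ℓ)
    (hdense : ∀ S : Finset V, S.card < s₁ + s₂ + ℓ → edgesIn G S < 2 * s₂)
    (hexp : ∀ S : Finset V, S.card = s₁ → s₂ + ℓ ≤ (extNbhd G' S).card)
    (hcard : ℓ + s₁ + s₂ ≤ Fintype.card V) :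
    ∀ n : ℕ, ∀ (D : Finset V) (u v : V) (wk : G'.Walk u v),
      2 * (Fintype.card V - (D.card + wk.support.length)) + wk.support.length < n →
      wk.IsPath → wk.length < ℓ → D.card ≤ s₁ →
      (∀ a ∈ wk.support, a ∉ D) →
      (∀ a ∈ wk.support, ∀ b ∈ wk.support, G.Adj a b → s(a, b) ∈ wk.edges) →
      (∀ w ∈ D, ∀ z, z ∉ D → z ∉ wk.support → G'.Adj w z →
        ∃ x, (x ∈ D ∨ x ∈ wk.support) ∧ x ≠ w ∧ G.Adj z x) →
      ((∃ w' ∈ D, G.Adj u w') ∨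
        (∀ w ∈ D, ∀ z, z ∉ D → z ∉ wk.support → G'.Adj w z →
          ∃ x, (x ∈ D ∨ x ∈ wk.support) ∧ x ≠ w ∧ x ≠ u ∧ G.Adj z x)) →
      ∃ (a b : V) (wf : G'.Walk a b), wf.IsPath ∧ wf.length = ℓ ∧
        ∀ p ∈ wf.support, ∀ q ∈ wf.support, G.Adj p q → s(p, q) ∈ wf.edges := by
  intro n
  induction n with
  | zero =>
    intro D u v wk hμ _ _ _ _ _ _ _
    omega
  | succ n ih =>
    intro D u v wk hμ hpath hlen hDcard hdisj hind hI4 hI5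
    have hnd : wk.support.Nodup := hpath.support_nodup
    have hsl : wk.support.length = wk.length + 1 := wk.length_support
    have hDS : D.card + wk.support.length ≤ Fintype.card V := card_add_len_le D _ hnd hdisj
    by_cases hpush : ∃ z, z ∉ D ∧ z ∉ wk.support ∧ G'.Adj z u ∧
        ∀ b ∈ wk.support, G.Adj z b → b = u
    · obtain ⟨z, hzD, hzS, hzadj, hzind⟩ := hpush
      have hpath' : (SimpleGraph.Walk.cons hzadj wk).IsPath := hpath.cons hzS
      have hind' : ∀ a ∈ (SimpleGraph.Walk.cons hzadj wk).support,
          ∀ b ∈ (SimpleGraph.Walk.cons hzadj wk).support, G.Adj a b →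
          s(a, b) ∈ (SimpleGraph.Walk.cons hzadj wk).edges := by
        intro a ha b hb hab
        rw [SimpleGraph.Walk.support_cons, List.mem_cons] at ha hb
        rw [SimpleGraph.Walk.edges_cons]
        rcases ha with rfl | ha
        · rcases hb with rfl | hb
          · exact absurd rfl hab.ne
          · have hbu : b = u := hzind b hb hab
            subst hbu
            exact List.mem_cons_self
        · rcases hb with rfl | hb
          · have hau : a = u := hzind a ha hab.symm
            subst hau
            rw [Sym2.eq_swap]
            exact List.mem_cons_self
          · exact List.mem_cons_of_mem _ (hind a ha b hb hab)
      by_cases hfin : wk.length + 1 = ℓ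
      · exact ⟨z, v, SimpleGraph.Walk.cons hzadj wk, hpath',
          by rw [SimpleGraph.Walk.length_cons, hfin], hind'⟩
      · have hdisj' : ∀ a ∈ (SimpleGraph.Walk.cons hzadj wk).support, a ∉ D := by
          intro a ha
          rw [SimpleGraph.Walk.support_cons, List.mem_cons] at ha
          rcases ha with rfl | ha
          · exact hzD
          · exact hdisj a ha
        refine ih D z v (SimpleGraph.Walk.cons hzadj wk) ?_ hpath' ?_ hDcard hdisj' hind' ?_ ?_
        · have hDS' : D.card + (SimpleGraph.Walk.cons hzadj wk).support.length ≤
              Fintype.card V := card_add_len_le D _ hpath'.support_nodup hdisj'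
          rw [SimpleGraph.Walk.support_cons, List.length_cons] at hDS' ⊢
          omega
        · rw [SimpleGraph.Walk.length_cons]; omega
        · intro w hw y hyD hyS hadj
          rw [SimpleGraph.Walk.support_cons, List.mem_cons] at hyS
          push_neg at hyS
          obtain ⟨x, hx, hxw, hxadj⟩ := hI4 w hw y hyD hyS.2 hadj
          refine ⟨x, ?_, hxw, hxadj⟩
          rcases hx with hx | hx
          · exact Or.inl hx
          · exact Or.inr (by
              rw [SimpleGraph.Walk.support_cons]; exact List.mem_cons_of_mem _ hx)
        · refine Or.inr ?_
          intro w hw y hyD hyS hadj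
          rw [SimpleGraph.Walk.support_cons, List.mem_cons] at hyS
          push_neg at hyS
          obtain ⟨x, hx, hxw, hxadj⟩ := hI4 w hw y hyD hyS.2 hadj
          refine ⟨x, ?_, hxw, ?_, hxadj⟩
          · rcases hx with hx | hx
            · exact Or.inl hx
            · exact Or.inr (by
                rw [SimpleGraph.Walk.support_cons]; exact List.mem_cons_of_mem _ hx)
          · rintro rfl
            rcases hx with hx | hx
            · exact hzD hx
            · exact hzS hx
    · push_neg at hpush
      cases wk with
      | nil =>
        by_cases hD1 : D.card = s₁
        · exfalso
          refine contra_lemma G G' hsub s₁ s₂ ℓ hs₂ hdense hexp D hD1 [u] u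
            (List.mem_singleton_self u) (by simp; omega) ?_ ?_ ?_ ?_
          · intro a ha
            rw [List.mem_singleton] at ha
            subst ha
            exact hdisj a ((SimpleGraph.Walk.nil : G'.Walk a a).start_mem_support)
          · intro y hyD hyL w hw hadj
            have hyS : y ∉ (SimpleGraph.Walk.nil : G'.Walk u u).support := by
              rw [SimpleGraph.Walk.support_nil]; exact hyL
            obtain ⟨x, hx, hxw, hxadj⟩ := hI4 w hw y hyD hyS hadj
            refine ⟨x, ?_, hxw, hxadj⟩
            rcases hx with hx | hx
            · exact Or.inl hx
            · rw [SimpleGraph.Walk.support_nil] at hx; exact Or.inr hx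
          · rcases hI5 with h5 | h5
            · exact Or.inl h5
            · refine Or.inr ?_
              intro y hyD hyL w hw hadj
              have hyS : y ∉ (SimpleGraph.Walk.nil : G'.Walk u u).support := by
                rw [SimpleGraph.Walk.support_nil]; exact hyL
              obtain ⟨x, hx, hxw, hxu, hxadj⟩ := h5 w hw y hyD hyS hadj
              refine ⟨x, ?_, hxw, hxu, hxadj⟩
              rcases hx with hx | hx
              · exact Or.inl hx
              · rw [SimpleGraph.Walk.support_nil] at hx; exact Or.inr hx
          · intro h1
            exfalso
            rw [List.length_singleton] at h1
            omega
        · -- pop-root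
          have huD : u ∉ D :=
            hdisj u ((SimpleGraph.Walk.nil : G'.Walk u u).start_mem_support)
          have hD'card : (insert u D).card = D.card + 1 := Finset.card_insert_of_notMem huD
          have hex : ∃ u', u' ∉ insert u D := by
            by_contra hno
            push_neg at hno
            have hsub2 : (Finset.univ : Finset V) ⊆ insert u D := fun a _ => hno a
            have := Finset.card_le_card hsub2
            rw [Finset.card_univ] at this
            omega
          obtain ⟨u', hu'⟩ := hex
          have hkey : ∀ w ∈ insert u D, ∀ y, y ∉ insert u D →
              y ∉ (SimpleGraph.Walk.nil : G'.Walk u' u').support → G'.Adj w y →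
              ∃ x, x ∈ insert u D ∧ x ≠ w ∧ G.Adj y x := by
            intro w hw y hyD _ hadj
            have hyu : y ≠ u := fun hc => hyD (hc ▸ Finset.mem_insert_self u D)
            have hyD0 : y ∉ D := fun hc => hyD (Finset.mem_insert_of_mem hc)
            rcases Finset.mem_insert.mp hw with rfl | hw
            · exfalso
              have hyS0 : y ∉ (SimpleGraph.Walk.nil : G'.Walk w w).support := by
                rw [SimpleGraph.Walk.support_nil, List.mem_singleton]; exact hyu
              obtain ⟨b0, hb0, _, hb0u⟩ := hpush y hyD0 hyS0 hadj.symm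
              rw [SimpleGraph.Walk.support_nil, List.mem_singleton] at hb0
              exact hb0u hb0
            · have hyS0 : y ∉ (SimpleGraph.Walk.nil : G'.Walk u u).support := by
                rw [SimpleGraph.Walk.support_nil, List.mem_singleton]; exact hyu
              obtain ⟨x, hx, hxw, hxadj⟩ := hI4 w hw y hyD0 hyS0 hadj
              refine ⟨x, ?_, hxw, hxadj⟩
              rcases hx with hx | hx
              · exact Finset.mem_insert_of_mem hx
              · rw [SimpleGraph.Walk.support_nil, List.mem_singleton] at hx
                subst hx
                exact Finset.mem_insert_self _ _
          refine ih (insert u D) u' u' SimpleGraph.Walk.nil ?_ SimpleGraph.Walk.IsPath.nil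
            (by rw [SimpleGraph.Walk.length_nil]; omega) (by omega) ?_ ?_ ?_ ?_
          · rw [SimpleGraph.Walk.support_nil, List.length_singleton] at hμ hDS ⊢
            omega
          · intro a ha
            rw [SimpleGraph.Walk.support_nil, List.mem_singleton] at ha
            subst ha
            exact hu'
          · intro a ha c hc hac
            rw [SimpleGraph.Walk.support_nil, List.mem_singleton] at ha hc
            subst ha; subst hc
            exact absurd rfl hac.ne
          · intro w hw y hyD hyS hadj
            obtain ⟨x, hx, hxw, hxadj⟩ := hkey w hw y hyD hyS hadj
            exact ⟨x, Or.inl hx, hxw, hxadj⟩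
          · refine Or.inr ?_
            intro w hw y hyD hyS hadj
            obtain ⟨x, hx, hxw, hxadj⟩ := hkey w hw y hyD hyS hadj
            refine ⟨x, Or.inl hx, hxw, ?_, hxadj⟩
            rintro rfl
            exact hu' hx
      | @cons _ b _ hadj p =>
        have huP : u ∉ p.support := by
          rw [SimpleGraph.Walk.support_cons, List.nodup_cons] at hnd
          exact hnd.1
        by_cases hD1 : D.card = s₁
        · exfalso
          refine contra_lemma G G' hsub s₁ s₂ ℓ hs₂ hdense hexp D hD1
            (SimpleGraph.Walk.cons hadj p).support u
            (SimpleGraph.Walk.start_mem_support _) (by rw [hsl]; omega) hdisj ?_ ?_ ?_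
          · intro y hyD hyL w hw hadjw
            exact hI4 w hw y hyD hyL hadjw
          · rcases hI5 with h5 | h5
            · exact Or.inl h5
            · refine Or.inr ?_
              intro y hyD hyL w hw hadjw
              exact h5 w hw y hyD hyL hadjw
          · intro _
            refine ⟨b, ?_, ?_, hsub hadj⟩
            · rw [SimpleGraph.Walk.support_cons]
              exact List.mem_cons_of_mem _ p.start_mem_support
            · intro hc
              exact huP (hc ▸ p.start_mem_support)
        · -- pop
          have huD : u ∉ D :=
            hdisj u ((SimpleGraph.Walk.cons hadj p).start_mem_support)
          have hD'card : (insert u D).card = D.card + 1 := Finset.card_insert_of_notMem huD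
          have hslc : (SimpleGraph.Walk.cons hadj p).support.length = p.support.length + 1 := by
            rw [SimpleGraph.Walk.support_cons, List.length_cons]
          refine ih (insert u D) b v p ?_ hpath.of_cons ?_ (by omega) ?_ ?_ ?_ ?_
          · rw [hslc] at hμ hDS
            omega
          · rw [SimpleGraph.Walk.length_cons] at hlen
            omega
          · intro a ha
            have haD : a ∉ D := hdisj a (by
              rw [SimpleGraph.Walk.support_cons]; exact List.mem_cons_of_mem _ ha)
            intro hc
            rcases Finset.mem_insert.mp hc with rfl | hc
            · exact huP ha
            · exact haD hc
          · intro a ha c hc hac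
            have hmem := hind a (by
                rw [SimpleGraph.Walk.support_cons]; exact List.mem_cons_of_mem _ ha)
              c (by
                rw [SimpleGraph.Walk.support_cons]; exact List.mem_cons_of_mem _ hc) hac
            rw [SimpleGraph.Walk.edges_cons] at hmem
            rcases List.mem_cons.mp hmem with he | he
            · exfalso
              rcases Sym2.eq_iff.mp he with ⟨rfl, _⟩ | ⟨_, rfl⟩
              · exact huP ha
              · exact huP hc
            · exact he
          · intro w hw y hyD hyS hadjw
            have hyu : y ≠ u := fun hc => hyD (hc ▸ Finset.mem_insert_self u D)
            have hyD0 : y ∉ D := fun hc => hyD (Finset.mem_insert_of_mem hc)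
            have hyS0 : y ∉ (SimpleGraph.Walk.cons hadj p).support := by
              rw [SimpleGraph.Walk.support_cons, List.mem_cons]
              push_neg
              exact ⟨hyu, hyS⟩
            rcases Finset.mem_insert.mp hw with rfl | hw
            · obtain ⟨b0, hb0, hb0adj, hb0u⟩ := hpush y hyD0 hyS0 hadjw.symm
              rw [SimpleGraph.Walk.support_cons, List.mem_cons] at hb0
              rcases hb0 with rfl | hb0
              · exact absurd rfl hb0u
              · exact ⟨b0, Or.inr hb0, hb0u, hb0adj⟩
            · obtain ⟨x, hx, hxw, hxadj⟩ := hI4 w hw y hyD0 hyS0 hadjw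
              refine ⟨x, ?_, hxw, hxadj⟩
              rcases hx with hx | hx
              · exact Or.inl (Finset.mem_insert_of_mem hx)
              · rw [SimpleGraph.Walk.support_cons, List.mem_cons] at hx
                rcases hx with rfl | hx
                · exact Or.inl (Finset.mem_insert_self _ _)
                · exact Or.inr hx
          · exact Or.inl ⟨u, Finset.mem_insert_self u D, (hsub hadj).symm⟩

end Aux

/-- If `G' ⊆ G`, every set of fewer than `s₁ + s₂ + ℓ` vertices spans fewer than `2s₂`
edges of `G`, every set of exactly `s₁` vertices has external `G'`-neighbourhood of size
at least `s₂ + ℓ`, and there are at least `ℓ + s₁ + s₂` vertices, then `G'` contains a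
path of length `ℓ` whose vertex set induces a path in `G`. -/
theorem dfs_long_induced_path {V : Type*} [Fintype V] (G G' : SimpleGraph V)
    (hsub : G' ≤ G) (s₁ s₂ ℓ : ℕ) (hs₁ : 0 < s₁) (hs₂ : 0 < s₂) (hℓ : 0 < ℓ)
    (hdense : ∀ S : Finset V, S.card < s₁ + s₂ + ℓ → edgesIn G S < 2 * s₂)
    (hexp : ∀ S : Finset V, S.card = s₁ → s₂ + ℓ ≤ (extNbhd G' S).card)
    (hcard : ℓ + s₁ + s₂ ≤ Fintype.card V) :
    ∃ (u v : V) (w : G'.Walk u v),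
      w.IsPath ∧ w.length = ℓ ∧
      ∀ a ∈ w.support, ∀ b ∈ w.support, G.Adj a b → s(a, b) ∈ w.edges := by
  classical
  by_cases hl1 : ℓ = 1
  · subst hl1
    have hs1le : s₁ ≤ (Finset.univ : Finset V).card := by
      rw [Finset.card_univ]; omega
    obtain ⟨S₀, _, hS₀card⟩ := Finset.exists_subset_card_eq hs1le
    have hexp0 := hexp S₀ hS₀card
    have hpos : 0 < (extNbhd G' S₀).card := by omega
    obtain ⟨z, hz⟩ := Finset.card_pos.mp hpos
    rw [mem_extNbhd] at hz
    obtain ⟨hzS, w, hwS, hadj⟩ := hz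
    refine ⟨w, z, SimpleGraph.Walk.cons hadj SimpleGraph.Walk.nil, ?_, ?_, ?_⟩
    · rw [SimpleGraph.Walk.isPath_def, SimpleGraph.Walk.support_cons,
        SimpleGraph.Walk.support_nil]
      simp [hadj.ne]
    · rw [SimpleGraph.Walk.length_cons, SimpleGraph.Walk.length_nil]
    · intro a ha bb hb hab
      rw [SimpleGraph.Walk.support_cons, SimpleGraph.Walk.support_nil] at ha hb
      rw [SimpleGraph.Walk.edges_cons, SimpleGraph.Walk.edges_nil]
      simp only [List.mem_cons, List.mem_singleton, List.not_mem_nil, or_false] at ha hb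
      rcases ha with rfl | rfl <;> rcases hb with rfl | rfl
      · exact absurd rfl hab.ne
      · exact List.mem_singleton.mpr rfl
      · rw [Sym2.eq_swap]; exact List.mem_singleton.mpr rfl
      · exact absurd rfl hab.ne
  · have hl2 : 2 ≤ ℓ := by omega
    have hne : Nonempty V := by
      rw [← Fintype.card_pos_iff]; omega
    obtain ⟨u₀⟩ := hne
    refine main_aux G G' hsub s₁ s₂ ℓ hs₂ hl2 hdense hexp hcard
      (2 * Fintype.card V + 2) ∅ u₀ u₀ SimpleGraph.Walk.nil ?_ SimpleGraph.Walk.IsPath.nil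
      (by rw [SimpleGraph.Walk.length_nil]; omega) (by simp) ?_ ?_ ?_ ?_
    · rw [SimpleGraph.Walk.support_nil, List.length_singleton, Finset.card_empty]
      omega
    · intro a _
      exact Finset.notMem_empty a
    · intro a ha c hc hac
      rw [SimpleGraph.Walk.support_nil, List.mem_singleton] at ha hc
      subst ha; subst hc
      exact absurd rfl hac.ne
    · intro w hw
      exact absurd hw (Finset.notMem_empty w)
    · refine Or.inr ?_
      intro w hw
      exact absurd hw (Finset.notMem_empty w)
end

section
/- With high probability, the random graph G ~ G(n, 64/n) has the property that every two disjoint vertex sets S and T with |S| = ⌈21n/10^7⌉ and |T| ≤ 175n/10^7 satisfy e(S,T) < (95/7)|S|. -/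
open Finset SimpleGraph Filter

open scoped Classical

/-- The graph on `Fin n` determined by an indicator function on pairs of vertices. -/
def graphOf (n : ℕ) (f : Sym2 (Fin n) → Bool) : SimpleGraph (Fin n) :=
  SimpleGraph.fromEdgeSet {e | f e = true}

/-- The probability of seeing a particular outcome of the `binom(n,2)` independent coin
flips, each with success probability `p`. -/
noncomputable def edgeWeight (n : ℕ) (p : ℝ) (f : Sym2 (Fin n) → Bool) : ℝ :=
  ∏ e : Sym2 (Fin n), if f e then p else 1 - p

/-- The probability that the binomial random graph `G(n,p)` lies in the set `A`. -/
noncomputable def graphProb (n : ℕ) (p : ℝ) (A : Set (SimpleGraph (Fin n))) : ℝ :=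
  ∑ f : Sym2 (Fin n) → Bool, if graphOf n f ∈ A then edgeWeight n p f else 0

/-- For disjoint `S` and `T`, the number of edges of `G` with one endpoint in `S` and the
other in `T`. -/
noncomputable def edgesBetween {V : Type*} (G : SimpleGraph V) (S T : Finset V) : ℕ :=
  ((S ×ˢ T).filter fun p => G.Adj p.1 p.2).card

lemma aux_sum_indicator (n : ℕ) (p : ℝ) (D : Finset (Sym2 (Fin n))) :
    ∑ f : Sym2 (Fin n) → Bool, (if ∀ e ∈ D, f e = true then edgeWeight n p f else 0)
      = p ^ D.card := by
  have key : ∀ f : Sym2 (Fin n) → Bool,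
      (if ∀ e ∈ D, f e = true then edgeWeight n p f else 0)
      = ∏ e : Sym2 (Fin n),
          (if e ∈ D then (if f e then p else 0) else (if f e then p else 1 - p)) := by
    intro f
    by_cases h : ∀ e ∈ D, f e = true
    · rw [if_pos h]
      unfold edgeWeight
      refine Finset.prod_congr rfl fun e _ => ?_
      by_cases he : e ∈ D
      · simp [he, h e he]
      · simp [he]
    · rw [if_neg h]
      push_neg at h
      obtain ⟨e0, he0, hf⟩ := h
      refine (Finset.prod_eq_zero (Finset.mem_univ e0) ?_).symm
      simp [he0, hf]
  rw [Finset.sum_congr rfl fun f _ => key f,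
    ← Fintype.prod_sum fun (e : Sym2 (Fin n)) (b : Bool) =>
      if e ∈ D then (if b = true then p else 0) else (if b = true then p else 1 - p)]
  have h2 : ∀ e : Sym2 (Fin n),
      (∑ b : Bool, if e ∈ D then (if b then p else 0) else (if b then p else 1 - p))
        = if e ∈ D then p else 1 := by
    intro e; by_cases he : e ∈ D <;> simp [he]
  rw [Finset.prod_congr rfl fun e _ => h2 e, Finset.prod_ite_mem, Finset.univ_inter,
    Finset.prod_const]

lemma sum_edgeWeight (n : ℕ) (p : ℝ) : ∑ f : Sym2 (Fin n) → Bool, edgeWeight n p f = 1 := by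
  simpa using aux_sum_indicator n p ∅

lemma edgeWeight_nonneg {n : ℕ} {p : ℝ} (hp : 0 ≤ p) (hp1 : p ≤ 1) (f : Sym2 (Fin n) → Bool) :
    0 ≤ edgeWeight n p f := by
  refine Finset.prod_nonneg fun e _ => ?_
  split <;> [exact hp; linarith]

lemma graphProb_add_compl (n : ℕ) (p : ℝ) (A : Set (SimpleGraph (Fin n))) :
    graphProb n p A + graphProb n p Aᶜ = 1 := by
  unfold graphProb
  rw [← Finset.sum_add_distrib]
  rw [show (1:ℝ) = ∑ f : Sym2 (Fin n) → Bool, edgeWeight n p f from (sum_edgeWeight n p).symm]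
  refine Finset.sum_congr rfl fun f _ => ?_
  by_cases h : graphOf n f ∈ A <;> simp [h]

lemma graphProb_le_sum {n : ℕ} {p : ℝ} (hp : 0 ≤ p) (hp1 : p ≤ 1)
    {ι : Type*} (I : Finset ι) (A : Set (SimpleGraph (Fin n)))
    (B : ι → Set (SimpleGraph (Fin n))) (h : ∀ G ∈ A, ∃ i ∈ I, G ∈ B i) :
    graphProb n p A ≤ ∑ i ∈ I, graphProb n p (B i) := by
  unfold graphProb
  rw [Finset.sum_comm]
  refine Finset.sum_le_sum fun f _ => ?_
  by_cases hf : graphOf n f ∈ A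
  · rw [if_pos hf]
    obtain ⟨i, hi, hB⟩ := h _ hf
    have : (if graphOf n f ∈ B i then edgeWeight n p f else 0) = edgeWeight n p f := if_pos hB
    calc edgeWeight n p f = (if graphOf n f ∈ B i then edgeWeight n p f else 0) := this.symm
      _ ≤ ∑ j ∈ I, (if graphOf n f ∈ B j then edgeWeight n p f else 0) := by
          refine Finset.single_le_sum
            (f := fun j => if graphOf n f ∈ B j then edgeWeight n p f else 0)
            (fun j _ => ?_) hi
          split
          · exact edgeWeight_nonneg hp hp1 f
          · exact le_rfl
  · rw [if_neg hf]
    refine Finset.sum_nonneg fun j _ => ?_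
    split
    · exact edgeWeight_nonneg hp hp1 f
    · exact le_rfl

def eventOf (n : ℕ) (D : Finset (Sym2 (Fin n))) : Set (SimpleGraph (Fin n)) :=
  {G | ∀ e ∈ D, e ∈ G.edgeSet}

lemma graphProb_eventOf (n : ℕ) (p : ℝ) (D : Finset (Sym2 (Fin n)))
    (hd : ∀ e ∈ D, ¬ e.IsDiag) :
    graphProb n p (eventOf n D) = p ^ D.card := by
  rw [← aux_sum_indicator n p D]
  unfold graphProb
  refine Finset.sum_congr rfl fun f _ => ?_
  have : graphOf n f ∈ eventOf n D ↔ ∀ e ∈ D, f e = true := by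
    unfold eventOf graphOf
    simp only [Set.mem_setOf_eq, SimpleGraph.edgeSet_fromEdgeSet]
    constructor
    · intro h e he
      exact (h e he).1
    · intro h e he
      exact ⟨h e he, hd e he⟩
  simp only [this]
noncomputable def sFun (n : ℕ) : ℕ := ⌈(21 : ℝ) * n / 10 ^ 7⌉₊
noncomputable def tFun (n : ℕ) : ℕ := ⌊(175 : ℝ) * n / 10 ^ 7⌋₊
noncomputable def kFun (n : ℕ) : ℕ := ⌈(95 : ℝ) / 7 * sFun n⌉₊

noncomputable def pairsOf {n : ℕ} (S T : Finset (Fin n)) : Finset (Sym2 (Fin n)) :=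
  (S ×ˢ T).image fun p => s(p.1, p.2)

noncomputable def famD (n : ℕ) : Finset (Finset (Sym2 (Fin n))) :=
  (Finset.univ.powersetCard (sFun n)).biUnion fun S =>
    ((Finset.univ \ S).powersetCard (tFun n)).biUnion fun T =>
      (pairsOf S T).powersetCard (kFun n)

lemma mem_famD {n : ℕ} {D : Finset (Sym2 (Fin n))} (hD : D ∈ famD n) :
    D.card = kFun n ∧ ∀ e ∈ D, ¬ e.IsDiag := by
  simp only [famD, Finset.mem_biUnion] at hD
  obtain ⟨S, hS, T, hT, hD⟩ := hD
  rw [Finset.mem_powersetCard] at hD hS hT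
  refine ⟨hD.2, fun e he => ?_⟩
  have := hD.1 he
  simp only [pairsOf, Finset.mem_image] at this
  obtain ⟨q, hq, rfl⟩ := this
  rw [Finset.mem_product] at hq
  have h1 : q.2 ∈ Finset.univ \ S := hT.1 hq.2
  rw [Finset.mem_sdiff] at h1
  simp only [Sym2.isDiag_iff_proj_eq]
  intro hqq
  exact h1.2 (hqq ▸ hq.1)

lemma card_pairsOf_le {n : ℕ} (S T : Finset (Fin n)) :
    (pairsOf S T).card ≤ S.card * T.card := by
  calc (pairsOf S T).card ≤ (S ×ˢ T).card := Finset.card_image_le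
    _ = S.card * T.card := Finset.card_product S T

lemma card_famD_le (n : ℕ) :
    (famD n).card ≤ n.choose (sFun n) * (n.choose (tFun n) *
      ((sFun n * tFun n).choose (kFun n))) := by
  refine (Finset.card_biUnion_le).trans ?_
  have hcard : (Finset.univ.powersetCard (sFun n) : Finset (Finset (Fin n))).card
      = n.choose (sFun n) := by
    rw [Finset.card_powersetCard, Finset.card_univ, Fintype.card_fin]
  calc ∑ S ∈ Finset.univ.powersetCard (sFun n),
        (((Finset.univ \ S).powersetCard (tFun n)).biUnion fun T =>
          (pairsOf S T).powersetCard (kFun n)).card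
      ≤ ∑ _S ∈ Finset.univ.powersetCard (sFun n),
          (n.choose (tFun n) * ((sFun n * tFun n).choose (kFun n))) := by
        refine Finset.sum_le_sum fun S hS => ?_
        refine (Finset.card_biUnion_le).trans ?_
        rw [Finset.mem_powersetCard] at hS
        calc ∑ T ∈ (Finset.univ \ S).powersetCard (tFun n),
              ((pairsOf S T).powersetCard (kFun n)).card
            ≤ ∑ _T ∈ (Finset.univ \ S).powersetCard (tFun n),
              ((sFun n * tFun n).choose (kFun n)) := by
              refine Finset.sum_le_sum fun T hT => ?_
              rw [Finset.mem_powersetCard] at hT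
              rw [Finset.card_powersetCard]
              refine Nat.choose_le_choose _ ?_
              refine (card_pairsOf_le S T).trans ?_
              rw [hS.2, hT.2]
          _ ≤ n.choose (tFun n) * ((sFun n * tFun n).choose (kFun n)) := by
              rw [Finset.sum_const, smul_eq_mul]
              refine Nat.mul_le_mul_right _ ?_
              rw [Finset.card_powersetCard]
              refine Nat.choose_le_choose _ ?_
              exact (Finset.card_le_univ _).trans (by simp)
    _ = n.choose (sFun n) * (n.choose (tFun n) * ((sFun n * tFun n).choose (kFun n))) := by
        rw [Finset.sum_const, smul_eq_mul, hcard]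

lemma cover {n : ℕ} (hn : sFun n + tFun n ≤ n) (G : SimpleGraph (Fin n))
    (hG : G ∈ ({G | ∀ S T : Finset (Fin n), Disjoint S T →
            S.card = ⌈(21 : ℝ) * n / 10 ^ 7⌉₊ → (T.card : ℝ) ≤ 175 * n / 10 ^ 7 →
            (edgesBetween G S T : ℝ) < 95 / 7 * S.card}ᶜ : Set (SimpleGraph (Fin n)))) :
    ∃ D ∈ famD n, G ∈ eventOf n D := by
  simp only [Set.mem_compl_iff, Set.mem_setOf_eq, not_forall, not_lt] at hG
  obtain ⟨S, T, hdisj, hScard, hTcard, hedges⟩ := hG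
  -- extend T to T' of size tFun n inside univ \ S
  have hTsub : T ⊆ Finset.univ \ S := by
    intro x hx
    rw [Finset.mem_sdiff]
    exact ⟨Finset.mem_univ x, fun hxS => (Finset.disjoint_left.mp hdisj hxS) hx⟩
  have hTle : T.card ≤ tFun n := Nat.le_floor hTcard
  have hcard_sdiff : (Finset.univ \ S).card = n - sFun n := by
    rw [Finset.card_sdiff_of_subset (Finset.subset_univ S), Finset.card_univ, Fintype.card_fin, hScard]
    rfl
  have htn : tFun n ≤ (Finset.univ \ S).card := by
    rw [hcard_sdiff]; omega
  obtain ⟨T', hTT', hT'sub, hT'card⟩ := Finset.exists_subsuperset_card_eq hTsub hTle htn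
  -- edgesBetween monotone
  have hmono : edgesBetween G S T ≤ edgesBetween G S T' := by
    unfold edgesBetween
    refine Finset.card_le_card (Finset.filter_subset_filter _ ?_)
    exact Finset.product_subset_product_right hTT'
  have hk : kFun n ≤ edgesBetween G S T' := by
    rw [kFun]
    refine Nat.ceil_le.mpr ?_
    have hs : sFun n = S.card := hScard.symm
    rw [hs]
    calc (95 : ℝ) / 7 * S.card ≤ (edgesBetween G S T : ℝ) := hedges
      _ ≤ (edgesBetween G S T' : ℝ) := by exact_mod_cast hmono
  obtain ⟨P, hPsub, hPcard⟩ := Finset.exists_subset_card_eq hk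
  have hPprod : ∀ q ∈ P, q ∈ S ×ˢ T' ∧ G.Adj q.1 q.2 := by
    intro q hq
    have := hPsub hq
    rw [Finset.mem_filter] at this
    exact this
  have hST'disj : Disjoint S T' := by
    rw [Finset.disjoint_left]
    intro a haS haT'
    have := hT'sub haT'
    rw [Finset.mem_sdiff] at this
    exact this.2 haS
  refine ⟨P.image fun q => s(q.1, q.2), ?_, ?_⟩
  · simp only [famD, Finset.mem_biUnion]
    refine ⟨S, ?_, T', ?_, ?_⟩
    · rw [Finset.mem_powersetCard]; exact ⟨Finset.subset_univ S, hScard⟩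
    · rw [Finset.mem_powersetCard]; exact ⟨hT'sub, hT'card⟩
    · rw [Finset.mem_powersetCard]
      constructor
      · refine Finset.image_subset_image ?_ |>.trans (Finset.Subset.refl _)
        exact hPsub.trans (Finset.filter_subset _ _)
      · rw [← hPcard]
        refine Finset.card_image_of_injOn ?_
        intro q hq r hr hqr
        have hq' := (hPprod q hq).1
        have hr' := (hPprod r hr).1
        rw [Finset.mem_product] at hq' hr'
        rw [Sym2.eq_iff] at hqr
        rcases hqr with ⟨h1, h2⟩ | ⟨h1, h2⟩
        · exact Prod.ext h1 h2
        · exfalso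
          exact Finset.disjoint_left.mp hST'disj hq'.1 (h1 ▸ hr'.2)
  · intro e he
    simp only [Finset.mem_image] at he
    obtain ⟨q, hq, rfl⟩ := he
    rw [SimpleGraph.mem_edgeSet]
    exact (hPprod q hq).2

lemma numE1 : (10:ℝ)^7/21 ≤ Real.exp (131/10) := by
  have he : (2.718281828 : ℝ) ≤ Real.exp 1 :=
    le_of_lt (lt_trans (by norm_num) Real.exp_one_gt_d9)
  refine le_of_pow_le_pow_left₀ (n := 10) (by norm_num) (Real.exp_pos _).le ?_
  have h1 : (Real.exp (131/10))^10 = Real.exp 131 := by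
    rw [← Real.exp_nat_mul]; norm_num
  rw [h1]
  have h2 : (2.718281828:ℝ)^131 ≤ Real.exp 131 := by
    have : Real.exp 131 = (Real.exp 1)^131 := by rw [← Real.exp_nat_mul]; norm_num
    rw [this]
    exact pow_le_pow_left₀ (by norm_num) he 131
  refine le_trans ?_ h2
  norm_num

lemma numE2 : (10:ℝ)^9/17499 ≤ Real.exp (274/25) := by
  have he : (2.718281828 : ℝ) ≤ Real.exp 1 :=
    le_of_lt (lt_trans (by norm_num) Real.exp_one_gt_d9)
  refine le_of_pow_le_pow_left₀ (n := 25) (by norm_num) (Real.exp_pos _).le ?_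
  have h1 : (Real.exp (274/25))^25 = Real.exp 274 := by
    rw [← Real.exp_nat_mul]; norm_num
  rw [h1]
  have h2 : (2.718281828:ℝ)^274 ≤ Real.exp 274 := by
    have : Real.exp 274 = (Real.exp 1)^274 := by rw [← Real.exp_nat_mul]; norm_num
    rw [this]
    exact pow_le_pow_left₀ (by norm_num) he 274
  refine le_trans ?_ h2
  rw [show (2.718281828:ℝ) = 679570457/250000000 by norm_num, div_pow, div_pow,
    div_le_div_iff₀ (by positivity) (by positivity)]
  have hN : ((10:ℕ)^9)^25 * 250000000^274 ≤ 679570457^274 * 17499^25 := by decide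
  exact_mod_cast hN

lemma numE3 : (784:ℝ) * Real.exp 1 / (95 * 10^5) ≤ Real.exp (-(42/5)) := by
  have key : (784:ℝ) * Real.exp (47/5) ≤ 95 * 10^5 := by
    refine le_of_pow_le_pow_left₀ (n := 5) (by norm_num) (by positivity) ?_
    have h1 : (Real.exp (47/5))^5 = Real.exp 47 := by
      rw [← Real.exp_nat_mul]; norm_num
    rw [mul_pow, h1]
    have h2 : Real.exp 47 ≤ (2.7182818286:ℝ)^47 := by
      have : Real.exp 47 = (Real.exp 1)^47 := by rw [← Real.exp_nat_mul]; norm_num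
      rw [this]
      exact pow_le_pow_left₀ (Real.exp_pos 1).le Real.exp_one_lt_d9.le 47
    calc (784:ℝ)^5 * Real.exp 47 ≤ (784:ℝ)^5 * (2.7182818286:ℝ)^47 := by
          exact mul_le_mul_of_nonneg_left h2 (by positivity)
      _ ≤ ((95:ℝ) * 10^5)^5 := by norm_num
  rw [← mul_le_mul_iff_of_pos_right (Real.exp_pos (42/5)), ← Real.exp_add]
  have h0 : (-(42/5) + 42/5 : ℝ) = 0 := by norm_num
  rw [h0, Real.exp_zero, div_mul_eq_mul_div, div_le_one (by norm_num), mul_assoc, ← Real.exp_add]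
  have h1 : (1 + 42/5 : ℝ) = 47/5 := by norm_num
  rw [h1]
  exact key
lemma choose_le_pow_exp (m k : ℕ) (hk : 1 ≤ k) :
    (m.choose k : ℝ) ≤ (Real.exp 1 * m / k) ^ k := by
  have hkpos : (0:ℝ) < k := by exact_mod_cast hk
  have hfpos : (0:ℝ) < (Nat.factorial k) := by exact_mod_cast Nat.factorial_pos k
  have h1 : (m.choose k : ℝ) ≤ (m:ℝ)^k / (Nat.factorial k) := by
    exact_mod_cast Nat.choose_le_pow_div k m
  have h2 : ((k:ℝ))^k / (Nat.factorial k) ≤ Real.exp k := Real.pow_div_factorial_le_exp (k:ℝ) hkpos.le k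
  have h3 : ((k:ℝ))^k ≤ Real.exp k * (Nat.factorial k) := by
    rw [div_le_iff₀ hfpos] at h2; linarith
  refine h1.trans ?_
  have h4 : (Real.exp 1 * m / k) ^ k = Real.exp k * (m:ℝ)^k / ((k:ℝ))^k := by
    rw [div_pow, mul_pow, ← Real.exp_nat_mul, mul_one]
  rw [h4, div_le_div_iff₀ hfpos (pow_pos hkpos k)]
  calc (m:ℝ)^k * (k:ℝ)^k ≤ (m:ℝ)^k * (Real.exp k * (Nat.factorial k)) :=
        mul_le_mul_of_nonneg_left h3 (by positivity)
    _ = Real.exp k * (m:ℝ)^k * (Nat.factorial k) := by ring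

lemma prob_bound {n : ℕ} (hn : (10:ℝ)^10 ≤ (n:ℝ)) :
    (n.choose (sFun n) : ℝ) * ((n.choose (tFun n) : ℝ) *
        (((sFun n * tFun n).choose (kFun n)) : ℝ)) * (64/(n:ℝ))^(kFun n)
      ≤ Real.exp (-(49 * (n:ℝ) / 10^8)) := by
  have hnpos : (0:ℝ) < n := by nlinarith [show (0:ℝ) < 10^10 by norm_num]
  set s : ℝ := (sFun n : ℝ) with hs_def
  set t : ℝ := (tFun n : ℝ) with ht_def
  set k : ℝ := (kFun n : ℝ) with hk_def
  have hs1 : 21 * (n:ℝ) / 10^7 ≤ s := Nat.le_ceil _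
  have hspos : (0:ℝ) < s := lt_of_lt_of_le (by positivity) hs1
  have ht1 : t ≤ 175 * (n:ℝ) / 10^7 := Nat.floor_le (by positivity)
  have ht2' : 175 * (n:ℝ) / 10^7 < t + 1 := Nat.lt_floor_add_one _
  have ht2 : 17499 * (n:ℝ) / 10^9 ≤ t := by nlinarith
  have htpos : (0:ℝ) < t := lt_of_lt_of_le (by positivity) ht2
  have hk1 : 95 / 7 * s ≤ k := Nat.le_ceil _
  have hkpos : (0:ℝ) < k := lt_of_lt_of_le (by positivity) hk1
  have hsnat : 1 ≤ sFun n := Nat.cast_pos.mp hspos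
  have htnat : 1 ≤ tFun n := Nat.cast_pos.mp htpos
  have hknat : 1 ≤ kFun n := Nat.cast_pos.mp hkpos
  have he1 : (0:ℝ) < Real.exp 1 := Real.exp_pos 1
  have hA : (n.choose (sFun n) : ℝ) ≤ (Real.exp (141/10))^(sFun n) := by
    refine (choose_le_pow_exp n (sFun n) hsnat).trans ?_
    refine pow_le_pow_left₀ (div_nonneg (by positivity) hspos.le) ?_ _
    have hb : Real.exp 1 * n / s ≤ Real.exp 1 * (10^7/21) := by
      rw [div_le_iff₀ hspos]
      nlinarith [mul_le_mul_of_nonneg_left hs1 he1.le]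
    refine hb.trans ?_
    calc Real.exp 1 * (10^7/21) ≤ Real.exp 1 * Real.exp (131/10) :=
          mul_le_mul_of_nonneg_left numE1 he1.le
      _ = Real.exp (141/10) := by rw [← Real.exp_add]; norm_num
  have hB : (n.choose (tFun n) : ℝ) ≤ (Real.exp (299/25))^(tFun n) := by
    refine (choose_le_pow_exp n (tFun n) htnat).trans ?_
    refine pow_le_pow_left₀ (div_nonneg (by positivity) htpos.le) ?_ _
    have hb : Real.exp 1 * n / t ≤ Real.exp 1 * (10^9/17499) := by
      rw [div_le_iff₀ htpos]
      nlinarith [mul_le_mul_of_nonneg_left ht2 he1.le]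
    refine hb.trans ?_
    calc Real.exp 1 * (10^9/17499) ≤ Real.exp 1 * Real.exp (274/25) :=
          mul_le_mul_of_nonneg_left numE2 he1.le
      _ = Real.exp (299/25) := by rw [← Real.exp_add]; norm_num
  have hC : (((sFun n * tFun n).choose (kFun n)) : ℝ) * (64/(n:ℝ))^(kFun n)
      ≤ (Real.exp (-(42/5)))^(kFun n) := by
    have h1 : (((sFun n * tFun n).choose (kFun n)) : ℝ)
        ≤ (Real.exp 1 * (s*t) / k)^(kFun n) := by
      have := choose_le_pow_exp (sFun n * tFun n) (kFun n) hknat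
      rwa [Nat.cast_mul] at this
    calc (((sFun n * tFun n).choose (kFun n)) : ℝ) * (64/(n:ℝ))^(kFun n)
        ≤ (Real.exp 1 * (s*t) / k)^(kFun n) * (64/(n:ℝ))^(kFun n) :=
          mul_le_mul_of_nonneg_right h1 (by positivity)
      _ = ((Real.exp 1 * (s*t) / k) * (64/(n:ℝ)))^(kFun n) := (mul_pow _ _ _).symm
      _ ≤ (Real.exp (-(42/5)))^(kFun n) := by
          refine pow_le_pow_left₀ ?_ ?_ _
          · have : (0:ℝ) ≤ Real.exp 1 * (s*t) / k := div_nonneg (by positivity) hkpos.le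
            positivity
          refine le_trans ?_ numE3
          have hsk : s / k ≤ 7/95 := by rw [div_le_iff₀ hkpos]; linarith
          have htn : t / (n:ℝ) ≤ 175/10^7 := by rw [div_le_iff₀ hnpos]; linarith
          have heq : Real.exp 1 * (s*t) / k * (64/(n:ℝ))
              = 64 * Real.exp 1 * (s/k) * (t/(n:ℝ)) := by
            field_simp
          rw [heq]
          have q1 : 64 * Real.exp 1 * (s/k) ≤ 64 * Real.exp 1 * (7/95) :=
            mul_le_mul_of_nonneg_left hsk (by positivity)
          calc 64 * Real.exp 1 * (s/k) * (t/(n:ℝ))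
              ≤ (64 * Real.exp 1 * (7/95)) * (175/10^7) := by
                refine mul_le_mul q1 htn (div_nonneg htpos.le hnpos.le) (by positivity)
            _ = 784 * Real.exp 1 / (95 * 10^5) := by ring
  calc (n.choose (sFun n) : ℝ) * ((n.choose (tFun n) : ℝ) *
        (((sFun n * tFun n).choose (kFun n)) : ℝ)) * (64/(n:ℝ))^(kFun n)
      = (n.choose (sFun n) : ℝ) * ((n.choose (tFun n) : ℝ) *
          ((((sFun n * tFun n).choose (kFun n)) : ℝ) * (64/(n:ℝ))^(kFun n))) := by ring
    _ ≤ (Real.exp (141/10))^(sFun n) * ((Real.exp (299/25))^(tFun n)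
          * (Real.exp (-(42/5)))^(kFun n)) := by
        refine mul_le_mul hA ?_ (by positivity) (by positivity)
        refine mul_le_mul hB hC (by positivity) (by positivity)
    _ = Real.exp ((sFun n) * (141/10) + ((tFun n) * (299/25) + (kFun n) * (-(42/5)))) := by
        rw [← Real.exp_nat_mul, ← Real.exp_nat_mul, ← Real.exp_nat_mul, ← Real.exp_add,
          ← Real.exp_add]
    _ ≤ Real.exp (-(49 * (n:ℝ) / 10^8)) := by
        rw [Real.exp_le_exp]
        rw [← hs_def, ← ht_def, ← hk_def]
        linarith
lemma graphProb_nonneg {n : ℕ} {p : ℝ} (hp : 0 ≤ p) (hp1 : p ≤ 1)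
    (A : Set (SimpleGraph (Fin n))) : 0 ≤ graphProb n p A := by
  refine Finset.sum_nonneg fun f _ => ?_
  split
  · exact edgeWeight_nonneg hp hp1 f
  · exact le_rfl

noncomputable def goodSet (n : ℕ) : Set (SimpleGraph (Fin n)) :=
  {G | ∀ S T : Finset (Fin n), Disjoint S T →
    S.card = ⌈(21 : ℝ) * n / 10 ^ 7⌉₊ → (T.card : ℝ) ≤ 175 * n / 10 ^ 7 →
    (edgesBetween G S T : ℝ) < 95 / 7 * S.card}

/-- With high probability, in `G(n, 64/n)` every two disjoint vertex sets `S`, `T` with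
`|S| = ⌈21n/10⁷⌉` and `|T| ≤ 175n/10⁷` satisfy `e(S,T) < (95/7)|S|`. -/
theorem few_edges_between_sets_two_colour_case :
    Tendsto (fun n : ℕ =>
        graphProb n (64 / n)
          {G | ∀ S T : Finset (Fin n), Disjoint S T →
            S.card = ⌈(21 : ℝ) * n / 10 ^ 7⌉₊ → (T.card : ℝ) ≤ 175 * n / 10 ^ 7 →
            (edgesBetween G S T : ℝ) < 95 / 7 * S.card})
      atTop (nhds 1) := by
  show Tendsto (fun n : ℕ => graphProb n (64 / n) (goodSet n)) atTop (nhds 1)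
  have key : ∀ n : ℕ, graphProb n (64 / n) (goodSet n)
      = 1 - graphProb n (64 / n) (goodSet n)ᶜ := by
    intro n
    linarith [graphProb_add_compl n (64 / n) (goodSet n)]
  simp only [key]
  have hbad : Tendsto (fun n : ℕ => graphProb n (64 / n) (goodSet n)ᶜ) atTop (nhds 0) := by
    refine squeeze_zero' ?_ ?_ ?_ (g := fun n : ℕ => Real.exp (-(49 * (n:ℝ) / 10^8)))
    · filter_upwards [eventually_ge_atTop 64] with n hn
      have hn' : (64:ℝ) ≤ (n:ℝ) := by exact_mod_cast hn
      refine graphProb_nonneg (by positivity) ?_ _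
      rw [div_le_one (by linarith)]
      linarith
    · filter_upwards [eventually_ge_atTop (10^10)] with n hn
      have hnR : (10:ℝ)^10 ≤ (n:ℝ) := by exact_mod_cast hn
      have hnpos : (0:ℝ) < n := by nlinarith [show (0:ℝ) < 10^10 by norm_num]
      have hp0 : (0:ℝ) ≤ 64 / n := by positivity
      have hp1 : (64:ℝ) / n ≤ 1 := by
        rw [div_le_one hnpos]; nlinarith [show (64:ℝ) ≤ 10^10 by norm_num]
      -- sFun n + tFun n ≤ n
      have hst : sFun n + tFun n ≤ n := by
        have h1 : (sFun n : ℝ) < 21 * (n:ℝ) / 10^7 + 1 :=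
          Nat.ceil_lt_add_one (by positivity)
        have h2 : (tFun n : ℝ) ≤ 175 * (n:ℝ) / 10^7 := Nat.floor_le (by positivity)
        have : (sFun n : ℝ) + (tFun n : ℝ) ≤ (n:ℝ) := by nlinarith
        exact_mod_cast this
      have step1 : graphProb n (64 / n) (goodSet n)ᶜ
          ≤ ∑ D ∈ famD n, graphProb n (64 / n) (eventOf n D) :=
        graphProb_le_sum hp0 hp1 (famD n) _ (eventOf n) (fun G hG => cover hst G hG)
      have step2 : ∑ D ∈ famD n, graphProb n (64 / n) (eventOf n D)
          = ((famD n).card : ℝ) * (64 / (n:ℝ)) ^ (kFun n) := by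
        rw [Finset.sum_congr rfl fun D hD => ?_]
        · rw [Finset.sum_const, nsmul_eq_mul]
        · obtain ⟨hcard, hdiag⟩ := mem_famD hD
          rw [graphProb_eventOf n _ D hdiag, hcard]
      have step3 : ((famD n).card : ℝ) * (64 / (n:ℝ)) ^ (kFun n)
          ≤ (n.choose (sFun n) : ℝ) * ((n.choose (tFun n) : ℝ) *
              (((sFun n * tFun n).choose (kFun n)) : ℝ)) * (64/(n:ℝ))^(kFun n) := by
        refine mul_le_mul_of_nonneg_right ?_ (by positivity)
        exact_mod_cast card_famD_le n
      calc graphProb n (64 / n) (goodSet n)ᶜ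
          ≤ ∑ D ∈ famD n, graphProb n (64 / n) (eventOf n D) := step1
        _ = ((famD n).card : ℝ) * (64 / (n:ℝ)) ^ (kFun n) := step2
        _ ≤ _ := step3
        _ ≤ Real.exp (-(49 * (n:ℝ) / 10^8)) := prob_bound hnR
    · have heq : ∀ n : ℕ, Real.exp (-(49 * (n:ℝ) / 10^8)) = (Real.exp (-(49/10^8)))^n := by
        intro n
        rw [← Real.exp_nat_mul]
        congr 1
        ring
      simp only [heq]
      exact tendsto_pow_atTop_nhds_zero_of_lt_one (Real.exp_pos _).le
        (Real.exp_lt_one_iff.mpr (by norm_num))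
  have := hbad.const_sub 1
  simpa using this
end
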